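/- arXiv:math/0509522 — 4 statements merged into one kernel-verified Lean document; each statement's English description precedes it below -/
import Mathlib

section
/- Let τ be a finite rooted ordered tree with total progeny ζ(τ), let u(0) < u(1) < ... < u(ζ(τ)-1) be its vertices in lexicographical order, and let W(τ) be the Łukasiewicz path defined by W_0(τ)=0 and W_{n+1}(τ)-W_n(τ)=k_{u(n)}(τ)-1, where k_v(τ) is the number of children of v. Then for every 0 ≤ n < ζ(τ), the height H_n(τ) = |u(n)| satisfies H_n(τ) = Card{ 0 ≤ j < n : W_j(τ) = min_{j ≤ k ≤ n} W_k(τ) }. -/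
/-!
`W n` is the size of the depth-first exploration stack at `u n`: the vertices that come after
`u n` but whose parent comes before it. The vertices visited between an ancestor of `u n` and
`u n` are its descendants, and passing to a descendant only pushes onto the stack, so `W` at an
ancestor of `u n` is a minimum of `W` up to `n`. If `u j` is not an ancestor of `u n`, the two
branch at some `q`, with `u j = q ++ a :: s`; the vertex `q ++ [a + 1]` is visited between
them, and its stack is contained in that of `u j`, which also holds `q ++ [a + 1]` itself, so
`W` drops below `W j` there. Hence the future minima before `n` are exactly the strict
ancestors of `u n`, and there are `|u n|` of them.
-/

/-- A rooted ordered tree: a finite, prefix-closed set of words over the positive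
integers containing the root `[]`, where the children of `u` are `u ++ [j]` for
`1 ≤ j ≤ k_u(τ)`. -/
def IsTree (τ : Finset (List ℕ)) : Prop :=
  [] ∈ τ ∧
  (∀ u : List ℕ, ∀ j : ℕ, u ++ [j] ∈ τ → u ∈ τ) ∧
  (∀ u ∈ τ, ∀ j : ℕ, u ++ [j] ∈ τ ↔ 1 ≤ j ∧ j ≤
    (τ.filter (fun v => v.length = u.length + 1 ∧ v.take u.length = u)).card)

/-- The number of children `k_u(τ)` of the vertex `u` in `τ`. -/
def childCount (τ : Finset (List ℕ)) (u : List ℕ) : ℕ :=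
  (τ.filter (fun v => v.length = u.length + 1 ∧ v.take u.length = u)).card

/-- The `n`-th vertex of `τ` in lexicographical order. -/
def vertexAt (τ : Finset (List ℕ)) (n : ℕ) : List ℕ :=
  (τ.sort (· ≤ ·)).getD n []

/-- The height process of `τ`: the generation of the `n`-th vertex in
lexicographical order. -/
def treeHeight (τ : Finset (List ℕ)) (n : ℕ) : ℕ :=
  (vertexAt τ n).length

/-- The Łukasiewicz path of `τ`: `W 0 = 0`, `W (n+1) - W n = k_{u(n)}(τ) - 1`. -/
def treeWalk (τ : Finset (List ℕ)) : ℕ → ℤ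
  | 0 => 0
  | n + 1 => treeWalk τ n + (childCount τ (vertexAt τ n) : ℤ) - 1

open Finset

namespace List

variable {α : Type*} [LinearOrder α] {l₁ l₂ l₃ : List α}

theorem IsPrefix.lt_of_ne (h : l₁ <+: l₂) (hne : l₁ ≠ l₂) : l₁ < l₂ := by
  obtain ⟨t, rfl⟩ := h
  obtain ⟨a, t, rfl⟩ := exists_cons_of_ne_nil (by simpa using hne : t ≠ [])
  simpa using append_left_lt (l₁ := l₁) (nil_lt_cons a t)

theorem le_of_prefix (h : l₁ <+: l₂) : l₁ ≤ l₂ := by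
  rcases eq_or_ne l₁ l₂ with rfl | hne
  · exact le_rfl
  · exact (h.lt_of_ne hne).le

theorem dropLast_lt (h : l₁ ≠ []) : l₁.dropLast < l₁ :=
  (dropLast_prefix l₁).lt_of_ne fun he => by
    have := congrArg length he
    simp only [length_dropLast] at this
    exact h (length_eq_zero_iff.1 (by omega))

theorem prefix_or_exists_of_lt (h : l₁ < l₂) :
    l₁ <+: l₂ ∨ ∃ p a b s t, l₁ = p ++ a :: s ∧ l₂ = p ++ b :: t ∧ a < b := by
  induction (h : Lex (· < ·) l₁ l₂) with
  | nil => exact .inl nil_prefix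
  | @rel a s b t hab => exact .inr ⟨[], a, b, s, t, rfl, rfl, hab⟩
  | @cons c s t _ ih =>
    rcases ih with h | ⟨p, a, b, s, t, rfl, rfl, hab⟩
    · exact .inl (cons_prefix_cons.2 ⟨rfl, h⟩)
    · exact .inr ⟨c :: p, a, b, s, t, rfl, rfl, hab⟩

theorem lt_of_lt_of_not_prefix (h : l₁ < l₂) (hp : ¬ l₁ <+: l₂) (h₁₃ : l₁ <+: l₃) :
    l₃ < l₂ := by
  obtain ⟨p, a, b, s, t, rfl, rfl, hab⟩ := (prefix_or_exists_of_lt h).resolve_left hp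
  obtain ⟨r, rfl⟩ := h₁₃
  simpa using append_left_lt (l₁ := p) (Lex.rel hab : a :: (s ++ r) < b :: t)

theorem IsPrefix.of_le_of_le (h₁₃ : l₁ <+: l₃) (h₁₂ : l₁ ≤ l₂) (h₂₃ : l₂ ≤ l₃) :
    l₁ <+: l₂ := by
  by_contra hp
  have h₁₂ : l₁ < l₂ := h₁₂.lt_of_ne (by rintro rfl; exact hp (prefix_refl l₁))
  exact (lt_of_lt_of_not_prefix h₁₂ hp h₁₃).not_ge h₂₃

theorem dropLast_prefix_of_dropLast_lt_of_lt (h₁ : l₂.dropLast < l₁) (h₂ : l₁ < l₂) :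
    l₂.dropLast <+: l₁ := by
  by_contra hp
  exact (lt_of_lt_of_not_prefix h₁ hp (dropLast_prefix l₂)).not_gt h₂

theorem not_prefix_of_dropLast_lt_of_lt (h₁ : l₂.dropLast < l₁) (h₂ : l₁ < l₂) :
    ¬ l₁ <+: l₂ := by
  intro hp
  rcases le_or_gt l₁.length l₂.dropLast.length with hl | hl
  · exact h₁.not_ge (le_of_prefix (prefix_of_prefix_length_le hp (dropLast_prefix l₂) hl))
  · rw [length_dropLast] at hl
    exact h₂.ne (hp.eq_of_length (by have := hp.length_le; omega))

end List

theorem childCount_eq_card_filter_dropLast (τ : Finset (List ℕ)) (u : List ℕ) :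
    childCount τ u = #{v ∈ τ | v ≠ [] ∧ v.dropLast = u} := by
  unfold childCount
  congr 1
  refine filter_congr fun v _ => ⟨fun ⟨hlen, htake⟩ => ?_, fun ⟨hne, hdrop⟩ => ?_⟩
  · refine ⟨List.ne_nil_of_length_pos (by omega), ?_⟩
    rwa [List.dropLast_eq_take, hlen, Nat.add_sub_cancel]
  · have hlen : v.length = u.length + 1 := by
      rw [← hdrop, List.length_dropLast, Nat.sub_add_cancel (List.length_pos_iff.2 hne)]
    refine ⟨hlen, ?_⟩
    rwa [show u.length = v.length - 1 by omega, ← List.dropLast_eq_take]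

theorem sum_childCount (τ s : Finset (List ℕ)) :
    ∑ u ∈ s, childCount τ u = #{v ∈ τ | v ≠ [] ∧ v.dropLast ∈ s} := by
  rw [card_eq_sum_card_fiberwise (f := List.dropLast) (t := s) fun v hv => (mem_filter.1 hv).2.2]
  refine sum_congr rfl fun u hu => ?_
  rw [childCount_eq_card_filter_dropLast, filter_filter]
  congr 1
  refine filter_congr fun v _ => ?_
  constructor
  · rintro ⟨hne, rfl⟩; exact ⟨⟨hne, hu⟩, rfl⟩
  · rintro ⟨⟨hne, -⟩, rfl⟩; exact ⟨hne, rfl⟩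

namespace IsTree

variable {τ : Finset (List ℕ)}

theorem mem_of_prefix (hτ : IsTree τ) {u v : List ℕ} (hv : v ∈ τ) (huv : u <+: v) : u ∈ τ := by
  obtain ⟨r, rfl⟩ := huv
  induction r using List.reverseRecOn with
  | nil => simpa using hv
  | append_singleton r a ih => exact ih (hτ.2.1 _ a (by simpa using hv))

theorem concat_mem_iff (hτ : IsTree τ) {u : List ℕ} (hu : u ∈ τ) (j : ℕ) :
    u ++ [j] ∈ τ ↔ 1 ≤ j ∧ j ≤ childCount τ u :=
  hτ.2.2 u hu j

end IsTree

section Enumeration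

variable {τ : Finset (List ℕ)} {m n : ℕ}

theorem vertexAt_eq_getElem (hn : n < #τ) :
    vertexAt τ n = (τ.sort (· ≤ ·))[n]'(by rwa [length_sort]) :=
  List.getD_eq_getElem _ _ _

theorem vertexAt_mem (hn : n < #τ) : vertexAt τ n ∈ τ := by
  rw [vertexAt_eq_getElem hn, ← mem_sort (· ≤ ·)]
  exact List.getElem_mem _

theorem exists_vertexAt_eq {v : List ℕ} (hv : v ∈ τ) : ∃ m < #τ, vertexAt τ m = v := by
  obtain ⟨m, hm, rfl⟩ := List.getElem_of_mem ((mem_sort (· ≤ ·)).2 hv)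
  rw [length_sort] at hm
  exact ⟨m, hm, vertexAt_eq_getElem hm⟩

theorem strictMonoOn_vertexAt : StrictMonoOn (vertexAt τ) (Set.Iio #τ) := by
  intro m hm n hn hmn
  rw [vertexAt_eq_getElem hm, vertexAt_eq_getElem hn]
  exact (sortedLT_sort τ).strictMono_get (show (⟨m, _⟩ : Fin _) < ⟨n, _⟩ from hmn)

theorem vertexAt_lt_vertexAt_iff (hm : m < #τ) (hn : n < #τ) :
    vertexAt τ m < vertexAt τ n ↔ m < n :=
  strictMonoOn_vertexAt.lt_iff_lt hm hn

theorem vertexAt_le_vertexAt_iff (hm : m < #τ) (hn : n < #τ) :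
    vertexAt τ m ≤ vertexAt τ n ↔ m ≤ n :=
  strictMonoOn_vertexAt.le_iff_le hm hn

theorem vertexAt_inj (hm : m < #τ) (hn : n < #τ) : vertexAt τ m = vertexAt τ n ↔ m = n :=
  strictMonoOn_vertexAt.injOn.eq_iff hm hn

theorem image_vertexAt_range (hn : n < #τ) :
    (range n).image (vertexAt τ) = {v ∈ τ | v < vertexAt τ n} := by
  ext v
  simp only [mem_image, mem_range, mem_filter]
  constructor
  · rintro ⟨m, hmn, rfl⟩
    exact ⟨vertexAt_mem (hmn.trans hn), (vertexAt_lt_vertexAt_iff (hmn.trans hn) hn).2 hmn⟩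
  · rintro ⟨hv, hvn⟩
    obtain ⟨m, hm, rfl⟩ := exists_vertexAt_eq hv
    exact ⟨m, (vertexAt_lt_vertexAt_iff hm hn).1 hvn, rfl⟩

end Enumeration

theorem treeWalk_eq_sum (τ : Finset (List ℕ)) (n : ℕ) :
    treeWalk τ n = ∑ m ∈ range n, ((childCount τ (vertexAt τ m) : ℤ) - 1) := by
  induction n with
  | zero => rfl
  | succ n ih => rw [treeWalk, ih, sum_range_succ]; ring

/-- The vertices whose parent comes before `x` but which themselves come after `x`: the stack of
the depth-first exploration of `τ` when it reaches `x`. -/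
def dfsStack (τ : Finset (List ℕ)) (x : List ℕ) : Finset (List ℕ) :=
  {v ∈ τ | x < v ∧ v.dropLast < x}

theorem IsTree.sum_childCount_filter_lt {τ : Finset (List ℕ)} (hτ : IsTree τ) {x : List ℕ}
    (hx : x ∈ τ) :
    ∑ u ∈ τ with u < x, childCount τ u = #{u ∈ τ | u < x} + #(dfsStack τ x) := by
  have hsplit : {v ∈ τ | v ≠ [] ∧ v.dropLast ∈ {u ∈ τ | u < x}} =
      {v ∈ τ | v ≠ [] ∧ v ≤ x} ∪ dfsStack τ x := by
    ext v
    simp only [dfsStack, mem_union, mem_filter]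
    constructor
    · rintro ⟨hv, hne, -, hlt⟩
      rcases le_or_gt v x with hvx | hxv
      · exact .inl ⟨hv, hne, hvx⟩
      · exact .inr ⟨hv, hxv, hlt⟩
    · rintro (⟨hv, hne, hvx⟩ | ⟨hv, hxv, hlt⟩)
      · refine ⟨hv, hne, hτ.mem_of_prefix hv v.dropLast_prefix, ?_⟩
        exact lt_of_lt_of_le (List.dropLast_lt hne) hvx
      · have hne : v ≠ [] := by rintro rfl; exact List.not_lt_nil x hxv
        exact ⟨hv, hne, hτ.mem_of_prefix hv v.dropLast_prefix, hlt⟩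
  have hdisj : Disjoint {v ∈ τ | v ≠ [] ∧ v ≤ x} (dfsStack τ x) :=
    disjoint_filter.2 fun v _ h₁ h₂ => h₂.1.not_ge h₁.2
  have hroot : {v ∈ τ | v ≠ [] ∧ v ≤ x} = {v ∈ τ | v ≤ x}.erase [] := by
    ext v; simp [and_left_comm]
  have hself : {v ∈ τ | v < x} = {v ∈ τ | v ≤ x}.erase x := by
    ext v; simp only [mem_filter, mem_erase, lt_iff_le_and_ne]; tauto
  have hle : #{v ∈ τ | v ≠ [] ∧ v ≤ x} = #{v ∈ τ | v < x} := by
    rw [hroot, hself, card_erase_of_mem, card_erase_of_mem]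
    · exact mem_filter.2 ⟨hx, le_rfl⟩
    · exact mem_filter.2 ⟨hτ.1, List.le_of_prefix List.nil_prefix⟩
  rw [sum_childCount, hsplit, card_union_of_disjoint hdisj, hle]

theorem IsTree.treeWalk_eq_card_dfsStack {τ : Finset (List ℕ)} (hτ : IsTree τ) {n : ℕ}
    (hn : n < #τ) : treeWalk τ n = #(dfsStack τ (vertexAt τ n)) := by
  have hinj : Set.InjOn (vertexAt τ) (range n) := fun m hm m' hm' h =>
    (vertexAt_inj ((mem_range.1 hm).trans hn) ((mem_range.1 hm').trans hn)).1 h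
  have hsum := hτ.sum_childCount_filter_lt (vertexAt_mem hn)
  rw [← image_vertexAt_range hn, sum_image hinj, card_image_of_injOn hinj, card_range] at hsum
  rw [treeWalk_eq_sum, sum_sub_distrib, ← Nat.cast_sum, hsum]
  simp

theorem dfsStack_subset_of_prefix (τ : Finset (List ℕ)) {x y : List ℕ} (h : x <+: y) :
    dfsStack τ x ⊆ dfsStack τ y := by
  intro v hv
  simp only [dfsStack, mem_filter] at hv ⊢
  obtain ⟨hv, hxv, hvx⟩ := hv
  exact ⟨hv, List.lt_of_lt_of_not_prefix hxv (List.not_prefix_of_dropLast_lt_of_lt hvx hxv) h,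
    hvx.trans_le (List.le_of_prefix h)⟩

theorem card_dfsStack_concat_succ_lt (τ : Finset (List ℕ)) {q : List ℕ} {a : ℕ} (s : List ℕ)
    (hz : q ++ [a + 1] ∈ τ) : #(dfsStack τ (q ++ [a + 1])) < #(dfsStack τ (q ++ a :: s)) := by
  have hxz : q ++ a :: s < q ++ [a + 1] := List.append_left_lt (List.Lex.rel (Nat.lt_succ_self a))
  have hqx : q < q ++ a :: s := (List.prefix_append q _).lt_of_ne (by simp)
  have hsub : dfsStack τ (q ++ [a + 1]) ⊆ dfsStack τ (q ++ a :: s) := by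
    intro v hv
    simp only [dfsStack, mem_filter] at hv ⊢
    obtain ⟨hv, hzv, hvz⟩ := hv
    have hpz := List.dropLast_prefix_of_dropLast_lt_of_lt hvz hzv
    have hpq : v.dropLast <+: q := (List.prefix_concat_iff.1 hpz).resolve_left hvz.ne
    exact ⟨hv, hxz.trans hzv, (List.le_of_prefix hpq).trans_lt hqx⟩
  have hzx : q ++ [a + 1] ∈ dfsStack τ (q ++ a :: s) := mem_filter.2 ⟨hz, hxz, by simpa using hqx⟩
  exact card_lt_card ((ssubset_iff_of_subset hsub).2
    ⟨_, hzx, fun h => lt_irrefl _ (mem_filter.1 h).2.1⟩)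

theorem eq_sInf_image_Icc_iff {β : Type*} [ConditionallyCompleteLinearOrder β] {f : ℕ → β}
    {j n : ℕ} (hjn : j ≤ n) :
    f j = sInf (f '' Set.Icc j n) ↔ ∀ k ∈ Set.Icc j n, f j ≤ f k := by
  have : Nonempty β := ⟨f j⟩
  refine ⟨fun h k hk => ?_, fun h => ?_⟩
  · rw [h]
    exact csInf_le ((Set.finite_Icc j n).image f).bddBelow (Set.mem_image_of_mem f hk)
  · have hleast : IsLeast (f '' Set.Icc j n) (f j) :=
      ⟨Set.mem_image_of_mem f ⟨le_rfl, hjn⟩, Set.forall_mem_image.2 h⟩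
    exact hleast.csInf_eq.symm

namespace IsTree

variable {τ : Finset (List ℕ)} {j k n : ℕ}

theorem treeWalk_le_of_prefix (hτ : IsTree τ) (hjk : j ≤ k) (hkn : k ≤ n) (hn : n < #τ)
    (h : vertexAt τ j <+: vertexAt τ n) : treeWalk τ j ≤ treeWalk τ k := by
  have hk := hkn.trans_lt hn
  have hj := hjk.trans_lt hk
  have hjk' : vertexAt τ j <+: vertexAt τ k :=
    h.of_le_of_le ((vertexAt_le_vertexAt_iff hj hk).2 hjk) ((vertexAt_le_vertexAt_iff hk hn).2 hkn)
  rw [hτ.treeWalk_eq_card_dfsStack hj, hτ.treeWalk_eq_card_dfsStack hk]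
  exact_mod_cast card_le_card (dfsStack_subset_of_prefix τ hjk')

theorem exists_treeWalk_lt_of_not_prefix (hτ : IsTree τ) (hjn : j < n) (hn : n < #τ)
    (h : ¬ vertexAt τ j <+: vertexAt τ n) :
    ∃ k, j < k ∧ k ≤ n ∧ treeWalk τ k < treeWalk τ j := by
  have hj := hjn.trans hn
  obtain ⟨q, a, b, s, t, hxj, hxn, hab⟩ :=
    (List.prefix_or_exists_of_lt ((vertexAt_lt_vertexAt_iff hj hn).2 hjn)).resolve_left h
  have hq : q ∈ τ := hτ.mem_of_prefix (vertexAt_mem hn) (hxn ▸ List.prefix_append q _)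
  have hqb : q ++ [b] ∈ τ := hτ.mem_of_prefix (vertexAt_mem hn) (by simp [hxn])
  have hz : q ++ [a + 1] ∈ τ := by
    have := (hτ.concat_mem_iff hq b).1 hqb
    exact (hτ.concat_mem_iff hq (a + 1)).2 ⟨by omega, by omega⟩
  obtain ⟨k, hk, hkz⟩ := exists_vertexAt_eq hz
  have hzn : q ++ [a + 1] ≤ vertexAt τ n := by
    rw [hxn]
    rcases (Nat.succ_le_of_lt hab).eq_or_lt with rfl | hab'
    · exact List.le_of_prefix (by simp)
    · exact (List.append_left_lt (List.Lex.rel hab')).le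
  refine ⟨k, ?_, ?_, ?_⟩
  · rw [← vertexAt_lt_vertexAt_iff hj hk, hkz, hxj]
    exact List.append_left_lt (List.Lex.rel (Nat.lt_succ_self a))
  · rwa [← vertexAt_le_vertexAt_iff hk hn, hkz]
  · rw [hτ.treeWalk_eq_card_dfsStack hk, hτ.treeWalk_eq_card_dfsStack hj, hkz, hxj]
    exact_mod_cast card_dfsStack_concat_succ_lt τ s hz

theorem treeWalk_eq_sInf_iff (hτ : IsTree τ) (hjn : j < n) (hn : n < #τ) :
    treeWalk τ j = sInf (treeWalk τ '' Set.Icc j n) ↔ vertexAt τ j <+: vertexAt τ n := by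
  rw [eq_sInf_image_Icc_iff hjn.le]
  refine ⟨fun h => by_contra fun hp => ?_, fun h k hk => hτ.treeWalk_le_of_prefix hk.1 hk.2 hn h⟩
  obtain ⟨k, hjk, hkn, hlt⟩ := hτ.exists_treeWalk_lt_of_not_prefix hjn hn hp
  exact (h k ⟨hjk.le, hkn⟩).not_gt hlt

theorem ncard_setOf_vertexAt_prefix (hτ : IsTree τ) (hn : n < #τ) :
    {j | j < n ∧ vertexAt τ j <+: vertexAt τ n}.ncard = treeHeight τ n := by
  set x := vertexAt τ n
  have hinj : Set.InjOn (fun j => (vertexAt τ j).length) {j | j < n ∧ vertexAt τ j <+: x} := by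
    rintro i ⟨hin, hi⟩ i' ⟨hi'n, hi'⟩ hl
    refine (vertexAt_inj (hin.trans hn) (hi'n.trans hn)).1 ?_
    exact (List.prefix_of_prefix_length_le hi hi' hl.le).eq_of_length hl
  have himage : (fun j => (vertexAt τ j).length) '' {j | j < n ∧ vertexAt τ j <+: x} =
      Set.Iio x.length := by
    ext i
    refine ⟨?_, fun hi => ?_⟩
    · rintro ⟨j, ⟨hjn, hj⟩, rfl⟩
      refine lt_of_le_of_ne hj.length_le fun hl => hjn.ne ?_
      exact (vertexAt_inj (hjn.trans hn) hn).1 (hj.eq_of_length hl)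
    · have hi : i < x.length := hi
      obtain ⟨j, hj, hjx⟩ :=
        exists_vertexAt_eq (hτ.mem_of_prefix (vertexAt_mem hn) (x.take_prefix i))
      have hlt : vertexAt τ j < x :=
        hjx ▸ (x.take_prefix i).lt_of_ne fun he => by
          have := congrArg List.length he
          simp only [List.length_take] at this
          omega
      refine ⟨j, ⟨(vertexAt_lt_vertexAt_iff hj hn).1 hlt, hjx ▸ x.take_prefix i⟩, ?_⟩
      simp [hjx, hi.le]
  rw [← hinj.ncard_image, himage, Set.ncard_Iio_nat]
  rfl

end IsTree

/-- for every `0 ≤ n < ζ(τ)`, the height `H_n(τ) = |u(n)|` satisfies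
`H_n(τ) = Card { 0 ≤ j < n : W_j(τ) = min_{j ≤ k ≤ n} W_k(τ) }`. -/
theorem height_eq_card_future_minima (τ : Finset (List ℕ)) (hτ : IsTree τ)
    (n : ℕ) (hn : n < τ.card) :
    treeHeight τ n =
      {j : ℕ | j < n ∧ treeWalk τ j = sInf (treeWalk τ '' Set.Icc j n)}.ncard := by
  have hset : {j : ℕ | j < n ∧ treeWalk τ j = sInf (treeWalk τ '' Set.Icc j n)} =
      {j | j < n ∧ vertexAt τ j <+: vertexAt τ n} :=
    Set.ext fun j => and_congr_right fun hjn => hτ.treeWalk_eq_sInf_iff hjn hn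
  rw [hset, hτ.ncard_setOf_vertexAt_prefix hn]
end

section
/- Let (W_n; n ≥ 0) be a random walk on the integers started at 0 whose jump distribution ν is supported on {-1, 0, 1, 2, ...} (i.e., jumps are at least -1). Then for every positive integer p, p · P(ζ = p) = P(W_p = -1), where ζ = inf{ n ≥ 0 : W_n = -1 }. -/
/-!
The increments `(ξ 0, …, ξ (p-1))` have an exchangeable law, so every cyclic rotation of
them has the same law. Cycle lemma: if increments `≥ -1` sum to `-1`, exactly one of the `p`
rotations has partial sums first reaching `-1` at time `p`, namely the rotation starting at
the first minimum of the walk on `[0, p)`. Hence `{W p = -1}` is, up to a null set, the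
disjoint union of the `p` rotated copies of `{ζ = p}`, all of the same probability.
-/

open MeasureTheory Finset

theorem Nat.sInf_setOf_eq_iff {P : ℕ → Prop} {m : ℕ} (hm : m ≠ 0) :
    sInf {n | P n} = m ↔ P m ∧ ∀ k < m, ¬P k := by
  constructor
  · rintro rfl
    have hne : {n | P n}.Nonempty := Nat.nonempty_of_pos_sInf (Nat.pos_of_ne_zero hm)
    exact ⟨Nat.sInf_mem hne, fun k hk => Nat.notMem_of_lt_sInf hk⟩
  · rintro ⟨hPm, hmin⟩
    refine le_antisymm (Nat.sInf_le hPm) (not_lt.1 fun hlt => hmin _ hlt ?_)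
    exact Nat.sInf_mem ⟨m, hPm⟩

section SkipFree

variable {s : ℕ → ℤ}

theorem exists_eq_of_le_of_le_of_skipFree (hs : ∀ n, s n - 1 ≤ s (n + 1)) {a b : ℕ} {t : ℤ}
    (hab : a ≤ b) (ha : t ≤ s a) (hb : s b ≤ t) : ∃ m, a ≤ m ∧ m ≤ b ∧ s m = t := by
  induction b, hab using Nat.le_induction with
  | base => exact ⟨a, le_rfl, le_rfl, le_antisymm hb ha⟩
  | succ b hab ih =>
    by_cases hsb : s b ≤ t
    · obtain ⟨m, ham, hmb, hm⟩ := ih hsb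
      exact ⟨m, ham, hmb.trans b.le_succ, hm⟩
    · exact ⟨b + 1, hab.trans b.le_succ, le_rfl, by linarith [hs b]⟩

theorem forall_ne_sub_one_iff_forall_le_of_skipFree (hs : ∀ n, s n - 1 ≤ s (n + 1))
    {j p : ℕ} :
    (∀ k < p, s (j + k) ≠ s j - 1) ↔ ∀ k < p, s j ≤ s (j + k) := by
  refine ⟨fun hne k hk => ?_, fun hle k hk => by linarith [hle k hk]⟩
  by_contra! hlt
  obtain ⟨m, hjm, hmk, hm⟩ := exists_eq_of_le_of_le_of_skipFree hs (t := s j - 1)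
    (Nat.le_add_right j k) (by linarith) (by linarith)
  exact hne (m - j) (by omega) (by rwa [Nat.add_sub_cancel' hjm])

theorem existsUnique_window_min {p : ℕ} (hp : 0 < p) (hper : ∀ n, s (n + p) = s n - 1) :
    ∃! j, j < p ∧ ∀ k < p, s j ≤ s (j + k) := by
  refine existsUnique_of_exists_of_unique ?_ ?_
  · have hmin : ∃ j, j < p ∧ ∀ m < p, s j ≤ s m := by
      obtain ⟨j, hj, hjmin⟩ := (range p).exists_min_image s ⟨0, mem_range.2 hp⟩
      exact ⟨j, mem_range.1 hj, fun m hm => hjmin m (mem_range.2 hm)⟩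
    obtain ⟨hjp, hjmin⟩ := Nat.find_spec hmin
    refine ⟨Nat.find hmin, hjp, fun k hk => ?_⟩
    rcases lt_or_ge (Nat.find hmin + k) p with hlt | hge
    · exact hjmin _ hlt
    · -- `s (j + k) = s (j + k - p) - 1`, and `j + k - p < j` is not a minimiser
      obtain ⟨m, hm, hsm⟩ : ∃ m < p, s m < s (Nat.find hmin + k - p) := by
        have := Nat.find_min hmin (m := Nat.find hmin + k - p) (by omega)
        push Not at this
        exact this (by omega)
      have := hper (Nat.find hmin + k - p)
      rw [Nat.sub_add_cancel hge] at this
      linarith [hjmin m hm]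
  · suffices ∀ i j, i < j → j < p → (∀ k < p, s i ≤ s (i + k)) →
        ¬∀ k < p, s j ≤ s (j + k) by
      rintro i j ⟨hip, hi⟩ ⟨hjp, hj⟩
      by_contra hij
      rcases Nat.lt_or_gt_of_ne hij with hlt | hgt
      exacts [this i j hlt hjp hi hj, this j i hgt hip hj hi]
    intro i j hij hjp hi hj
    have h1 := hi (j - i) (by omega)
    have h2 := hj (i + p - j) (by omega)
    rw [Nat.add_sub_cancel' hij.le] at h1
    rw [Nat.add_sub_cancel' (by omega), hper] at h2
    omega

end SkipFree

theorem MeasureTheory.measurePreserving_comp_equiv_pi {ι β : Type*} [Fintype ι]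
    [MeasurableSpace β] (ν : Measure β) [SigmaFinite ν] (e : ι ≃ ι) :
    MeasurePreserving (· ∘ e) (Measure.pi fun _ => ν) (Measure.pi fun _ => ν) :=
  measurePreserving_arrowCongr' (fun _ => ν) (fun _ => ν) e.symm
    (MeasurableEquiv.refl β) fun _ => MeasurePreserving.id ν

namespace CyclicWalk

open Fin.NatCast

variable {p : ℕ} [NeZero p]

/-- Partial sums of the `p`-periodic extension of `x`: the cast `ℕ → Fin p` reduces mod `p`. -/
def walk (x : Fin p → ℤ) (n : ℕ) : ℤ := ∑ i ∈ range n, x i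

def FirstHitsAtPeriod (x : Fin p → ℤ) : Prop := walk x p = -1 ∧ ∀ k < p, walk x k ≠ -1

theorem walk_succ (x : Fin p → ℤ) (n : ℕ) : walk x (n + 1) = walk x n + x n :=
  sum_range_succ _ _

theorem walk_add_period (x : Fin p → ℤ) (n : ℕ) : walk x (p + n) = walk x p + walk x n := by
  simp [walk, sum_range_add]

theorem walk_rotate (x : Fin p → ℤ) (j : Fin p) (k : ℕ) :
    walk (x ∘ Equiv.addRight j) k = walk x (j + k) - walk x j := by
  rw [walk, walk, sum_range_add, walk, add_sub_cancel_left]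
  refine sum_congr rfl fun i _ => ?_
  simp [add_comm]

theorem walk_rotate_period (x : Fin p → ℤ) (j : Fin p) :
    walk (x ∘ Equiv.addRight j) p = walk x p := by
  rw [walk_rotate, add_comm, walk_add_period]
  ring

theorem firstHitsAtPeriod_rotate_iff (x : Fin p → ℤ) (j : Fin p) :
    FirstHitsAtPeriod (x ∘ Equiv.addRight j) ↔
      walk x p = -1 ∧ ∀ k < p, walk x (j + k) ≠ walk x j - 1 := by
  simp only [FirstHitsAtPeriod, walk_rotate_period, walk_rotate]
  refine and_congr_right fun _ => forall₂_congr fun k _ => ?_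
  omega

theorem existsUnique_firstHitsAtPeriod_rotate {x : Fin p → ℤ} (hx : ∀ i, -1 ≤ x i)
    (hsum : walk x p = -1) : ∃! j : Fin p, FirstHitsAtPeriod (x ∘ Equiv.addRight j) := by
  have hstep (n : ℕ) : walk x n - 1 ≤ walk x (n + 1) := by
    linarith [walk_succ x n, hx n]
  have hper (n : ℕ) : walk x (n + p) = walk x n - 1 := by
    rw [add_comm, walk_add_period, hsum]
    ring
  have hrot (j : Fin p) :
      FirstHitsAtPeriod (x ∘ Equiv.addRight j) ↔ ∀ k < p, walk x j ≤ walk x (j + k) := by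
    rw [firstHitsAtPeriod_rotate_iff, ← forall_ne_sub_one_iff_forall_le_of_skipFree hstep]
    exact and_iff_right hsum
  obtain ⟨j, ⟨hjp, hj⟩, huniq⟩ := existsUnique_window_min (NeZero.pos p) hper
  exact ⟨⟨j, hjp⟩, (hrot _).2 hj, fun i hi => Fin.ext (huniq i ⟨i.isLt, (hrot i).1 hi⟩)⟩

theorem walk_period_of_firstHitsAtPeriod_rotate {x : Fin p → ℤ} {j : Fin p}
    (hj : FirstHitsAtPeriod (x ∘ Equiv.addRight j)) : walk x p = -1 :=
  walk_rotate_period x j ▸ hj.1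

theorem walk_eq_sum_of_le (f : ℕ → ℤ) {k : ℕ} (hk : k ≤ p) :
    walk (fun i : Fin p => f i) k = ∑ i ∈ range k, f i :=
  sum_congr rfl fun _ hi => congrArg f (Fin.val_cast_of_lt ((mem_range.1 hi).trans_le hk))

theorem measure_walk_eq_neg_one {μ : Measure (Fin p → ℤ)}
    (hrot : ∀ j : Fin p, MeasurePreserving (· ∘ Equiv.addRight j) μ μ)
    (hx : ∀ᵐ x ∂μ, ∀ i, -1 ≤ x i) :
    μ {x | walk x p = -1} = p * μ {x | FirstHitsAtPeriod x} := by
  have hcover : {x | walk x p = -1} =ᵐ[μ]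
      ⋃ j : Fin p, (· ∘ Equiv.addRight j) ⁻¹' {x | FirstHitsAtPeriod x} := by
    refine Filter.eventuallyEq_set.2 ?_
    filter_upwards [hx] with x hx
    simp only [Set.mem_ofPred_eq, Set.mem_iUnion, Set.mem_preimage]
    exact ⟨fun hsum => (existsUnique_firstHitsAtPeriod_rotate hx hsum).exists,
      fun ⟨_, hj⟩ => walk_period_of_firstHitsAtPeriod_rotate hj⟩
  have hdisj : Pairwise (Function.onFun (AEDisjoint μ)
      fun j : Fin p => (· ∘ Equiv.addRight j) ⁻¹' {x | FirstHitsAtPeriod x}) := by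
    intro i j hij
    refine measure_eq_zero_iff_ae_notMem.2 ?_
    filter_upwards [hx] with x hx ⟨hi, hj⟩
    exact hij ((existsUnique_firstHitsAtPeriod_rotate hx
      (walk_period_of_firstHitsAtPeriod_rotate hi)).unique hi hj)
  rw [measure_congr hcover,
    measure_iUnion₀ hdisj fun _ => MeasurableSet.of_discrete.nullMeasurableSet, tsum_fintype]
  simp_rw [(hrot _).measure_preimage MeasurableSet.of_discrete.nullMeasurableSet]
  simp

theorem pi_walk_eq_neg_one (ν : Measure ℤ) [SigmaFinite ν] (hν : ∀ᵐ k ∂ν, -1 ≤ k) :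
    Measure.pi (fun _ : Fin p => ν) {x | walk x p = -1} =
      p * Measure.pi (fun _ : Fin p => ν) {x | FirstHitsAtPeriod x} :=
  measure_walk_eq_neg_one (fun _ => measurePreserving_comp_equiv_pi ν _)
    (ae_all_iff.2 fun _ => Measure.tendsto_eval_ae_ae.eventually hν)

end CyclicWalk

open CyclicWalk in
/-- Otter's formula / cycle lemma: for a random walk `W` started at `0`
whose i.i.d. jumps are at least `-1` (law `ν` with `ν((-∞,-2]) = 0`), for every
positive integer `p`, `p · P(ζ = p) = P(W_p = -1)`, where
`ζ = inf { n ≥ 0 : W_n = -1 }`. -/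
theorem otter_cycle_lemma {Ω : Type*} [MeasurableSpace Ω] (P : Measure Ω)
    [IsProbabilityMeasure P]
    (ν : Measure ℤ) [IsProbabilityMeasure ν] (hν : ν {k : ℤ | k < -1} = 0)
    (ξ : ℕ → Ω → ℤ) (hmeas : ∀ i, Measurable (ξ i))
    (hindep : ProbabilityTheory.iIndepFun ξ P)
    (hdist : ∀ i, Measure.map (ξ i) P = ν)
    (W : ℕ → Ω → ℤ) (hW : ∀ n ω, W n ω = ∑ i ∈ Finset.range n, ξ i ω)
    (ζ : Ω → ℕ) (hζ : ∀ ω, ζ ω = sInf {n : ℕ | W n ω = -1})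
    (p : ℕ) (hp : 1 ≤ p) :
    (p : ENNReal) * P {ω | ζ ω = p} = P {ω | W p ω = -1} := by
  have : NeZero p := ⟨by omega⟩
  set J : Ω → Fin p → ℤ := fun ω i => ξ i ω
  have hJ : Measurable J := measurable_pi_lambda _ fun i => hmeas i
  have hlaw : P.map J = Measure.pi fun _ => ν := by
    rw [(ProbabilityTheory.iIndepFun_iff_map_fun_eq_pi_map (f := fun i : Fin p => ξ i)
      fun i => (hmeas i).aemeasurable).1 (hindep.precomp Fin.val_injective)]
    simp only [hdist]
  have hwalk (ω : Ω) {k : ℕ} (hk : k ≤ p) : W k ω = walk (J ω) k :=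
    (hW k ω).trans (walk_eq_sum_of_le (ξ · ω) hk).symm
  have hfirst : {ω | ζ ω = p} = J ⁻¹' {x | FirstHitsAtPeriod x} := by
    ext ω
    simp only [Set.mem_ofPred_eq, Set.mem_preimage, hζ, Nat.sInf_setOf_eq_iff (by omega : p ≠ 0),
      FirstHitsAtPeriod, hwalk ω le_rfl]
    exact and_congr_right fun _ => forall₂_congr fun k hk => by rw [hwalk ω hk.le]
  have hlast : {ω | W p ω = -1} = J ⁻¹' {x | walk x p = -1} := by
    ext ω
    simp only [Set.mem_ofPred_eq, Set.mem_preimage, hwalk ω le_rfl]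
  have hae : ∀ᵐ k ∂ν, -1 ≤ k :=
    (measure_eq_zero_iff_ae_notMem.1 hν).mono fun k hk => not_lt.1 hk
  rw [hfirst, hlast, ← Measure.map_apply hJ .of_discrete, ← Measure.map_apply hJ .of_discrete,
    hlaw, pi_walk_eq_neg_one ν hae]
end

section
/- Let w : {0,...,z} → ℤ be a finite integer path, and define H_n(w) = Card{ 0 ≤ j < n : w(j) = min_{j ≤ k ≤ n} w(k) } for 0 ≤ n ≤ z, the shifted path w^{(n)}(k) = w(k+n) - w(n), the reversed path ŵ^n(k) = w(n) - w(n-k) for 0 ≤ k ≤ n, and L_n(w) = Card{ 0 < j ≤ n : w(j) = max_{0 ≤ k ≤ j} w(k) }. Then for all 0 ≤ m ≤ z - n: H_{n+m}(w) - min_{n ≤ k ≤ n+m} H_k(w) = H_m(w^{(n)}). -/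
/-- The discrete height functional:
`H_n(w) = Card { 0 ≤ j < n : w j = min_{j ≤ k ≤ n} w k }`. -/
noncomputable def pathHeight (w : ℕ → ℤ) (n : ℕ) : ℕ :=
  {j : ℕ | j < n ∧ w j = sInf (w '' Set.Icc j n)}.ncard

/-- `L_n(w) = Card { 0 < j ≤ n : w j = max_{0 ≤ k ≤ j} w k }`, the number of record
times of the running maximum. -/
noncomputable def pathL (w : ℕ → ℤ) (n : ℕ) : ℕ :=
  {j : ℕ | 0 < j ∧ j ≤ n ∧ w j = sSup (w '' Set.Icc 0 j)}.ncard

/-- The shifted path `w^{(n)}(k) = w(k+n) - w(n)`. -/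
def pathShift (w : ℕ → ℤ) (n : ℕ) : ℕ → ℤ := fun k => w (k + n) - w n

/-- The time-space reversed path `ŵ^n(k) = w(n) - w(n-k)`, for `0 ≤ k ≤ n`. -/
def pathRev (w : ℕ → ℤ) (n : ℕ) : ℕ → ℤ := fun k => w n - w (n - k)

/-- The first passage time `t(a,w) = inf { k ∈ [0,z] : w k ≥ a }` (in `ℕ∞`, with
`inf ∅ = ⊤`). -/
noncomputable def firstPassage (z : ℕ) (a : ℤ) (w : ℕ → ℤ) : ℕ∞ :=
  sInf ((fun j : ℕ => (j : ℕ∞)) '' {j : ℕ | j ≤ z ∧ a ≤ w j})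

private lemma eq_sInf_iff' {w : ℕ → ℤ} {j k : ℕ} (hjk : j ≤ k) :
    w j = sInf (w '' Set.Icc j k) ↔ ∀ i, j ≤ i → i ≤ k → w j ≤ w i := by
  have hfin : (w '' Set.Icc j k).Finite := (Set.finite_Icc j k).image w
  have hmem : w j ∈ w '' Set.Icc j k := ⟨j, ⟨le_refl j, hjk⟩, rfl⟩
  constructor
  · intro h i hji hik
    rw [h]
    exact csInf_le hfin.bddBelow ⟨i, ⟨hji, hik⟩, rfl⟩
  · intro h
    refine le_antisymm ?_ (csInf_le hfin.bddBelow hmem)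
    refine le_csInf ⟨_, hmem⟩ ?_
    rintro b ⟨i, ⟨hji, hik⟩, rfl⟩
    exact h i hji hik

private lemma pathHeight_eq (w : ℕ → ℤ) (k : ℕ) :
    pathHeight w k = {j : ℕ | j < k ∧ ∀ i, j ≤ i → i ≤ k → w j ≤ w i}.ncard := by
  unfold pathHeight
  congr 1
  ext j
  simp only [Set.mem_setOf_eq]
  exact and_congr_right fun hj => eq_sInf_iff' hj.le

/-- for a finite integer path `w` of lifetime `z` and `n + m ≤ z`,
`H_{n+m}(w) - min_{n ≤ k ≤ n+m} H_k(w) = H_m(w^{(n)})`. -/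
theorem height_shift_identity (z : ℕ) (w : ℕ → ℤ) (n m : ℕ) (h : n + m ≤ z) :
    pathHeight w (n + m) - sInf (pathHeight w '' Set.Icc n (n + m))
      = pathHeight (pathShift w n) m := by
  classical
  -- K : first argmin of w on [n, n+m]
  have hex : ∃ k, k ∈ {k : ℕ | n ≤ k ∧ k ≤ n + m ∧ ∀ i, n ≤ i → i ≤ n + m → w k ≤ w i} := by
    have hne : (w '' Set.Icc n (n + m)).Nonempty :=
      ⟨w n, n, ⟨le_rfl, Nat.le_add_right n m⟩, rfl⟩
    have hfin : (w '' Set.Icc n (n + m)).Finite := (Set.finite_Icc _ _).image w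
    obtain ⟨k, ⟨hk1, hk2⟩, hk3⟩ := hne.csInf_mem hfin
    exact ⟨k, hk1, hk2, fun i h1 h2 => hk3 ▸ csInf_le hfin.bddBelow ⟨i, ⟨h1, h2⟩, rfl⟩⟩
  set K := sInf {k : ℕ | n ≤ k ∧ k ≤ n + m ∧ ∀ i, n ≤ i → i ≤ n + m → w k ≤ w i} with hK
  obtain ⟨hKn, hKnm, hKmin⟩ := Nat.sInf_mem hex
  have hfirst : ∀ j, n ≤ j → j < K → w K < w j := by
    intro j hj1 hj2
    by_contra hcon
    push_neg at hcon
    have hjmem : j ∈ {k : ℕ | n ≤ k ∧ k ≤ n + m ∧ ∀ i, n ≤ i → i ≤ n + m → w k ≤ w i} :=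
      ⟨hj1, le_trans hj2.le hKnm, fun i h1 h2 => le_trans hcon (hKmin i h1 h2)⟩
    exact absurd (Nat.sInf_le hjmem) (not_le.mpr hj2)
  set SA := {j : ℕ | j < n ∧ ∀ i, j ≤ i → i ≤ n + m → w j ≤ w i} with hSA
  set SB := {j : ℕ | n ≤ j ∧ j < n + m ∧ ∀ i, j ≤ i → i ≤ n + m → w j ≤ w i} with hSB
  have hSAfin : SA.Finite := (Set.finite_Iio n).subset (fun j hj => hj.1)
  have hSBfin : SB.Finite := (Set.finite_Iio (n + m)).subset (fun j hj => hj.2.1)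
  -- splitting the big set
  have hsplit : pathHeight w (n + m) = SA.ncard + SB.ncard := by
    rw [pathHeight_eq]
    have hset : {j : ℕ | j < n + m ∧ ∀ i, j ≤ i → i ≤ n + m → w j ≤ w i} = SA ∪ SB := by
      ext j
      simp only [Set.mem_setOf_eq, Set.mem_union, hSA, hSB]
      constructor
      · rintro ⟨hj, hmin⟩
        rcases lt_or_ge j n with hc | hc
        · exact Or.inl ⟨hc, hmin⟩
        · exact Or.inr ⟨hc, hj, hmin⟩
      · rintro (⟨hj, hmin⟩ | ⟨_, hj, hmin⟩)
        · exact ⟨lt_of_lt_of_le hj (Nat.le_add_right n m), hmin⟩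
        · exact ⟨hj, hmin⟩
    rw [hset, Set.ncard_union_eq ?_ hSAfin hSBfin]
    rw [Set.disjoint_left]
    intro j ha hb
    exact absurd hb.1 (not_le.mpr ha.1)
  -- pathHeight w K = SA.ncard
  have hHK : pathHeight w K = SA.ncard := by
    rw [pathHeight_eq]
    congr 1
    ext j
    simp only [Set.mem_setOf_eq, hSA]
    constructor
    · rintro ⟨hj, hmin⟩
      have hjn : j < n := by
        by_contra hc
        push_neg at hc
        exact absurd (hmin K hj.le le_rfl) (not_le.mpr (hfirst j hc hj))
      refine ⟨hjn, fun i h1 h2 => ?_⟩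
      rcases le_or_gt i K with hc | hc
      · exact hmin i h1 hc
      · exact le_trans (hmin K hj.le le_rfl) (hKmin i (le_trans hKn hc.le) h2)
    · rintro ⟨hj, hmin⟩
      exact ⟨lt_of_lt_of_le hj hKn, fun i h1 h2 => hmin i h1 (le_trans h2 hKnm)⟩
  -- the sInf of the image is SA.ncard
  have hmin_eq : sInf (pathHeight w '' Set.Icc n (n + m)) = SA.ncard := by
    refine le_antisymm (Nat.sInf_le ⟨K, ⟨hKn, hKnm⟩, hHK⟩) ?_
    refine le_csInf ⟨pathHeight w n, n, ⟨le_rfl, Nat.le_add_right n m⟩, rfl⟩ ?_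
    rintro b ⟨k, ⟨hk1, hk2⟩, rfl⟩
    rw [pathHeight_eq]
    refine Set.ncard_le_ncard ?_ ((Set.finite_Iio k).subset (fun j hj => hj.1))
    rintro j ⟨hj, hmin⟩
    exact ⟨lt_of_lt_of_le hj hk1, fun i h1 h2 => hmin i h1 (le_trans h2 hk2)⟩
  -- shifted path height equals SB.ncard
  have hshift : pathHeight (pathShift w n) m = SB.ncard := by
    rw [pathHeight_eq]
    have hcond : {j : ℕ | j < m ∧ ∀ i, j ≤ i → i ≤ m → pathShift w n j ≤ pathShift w n i}
        = {j : ℕ | j < m ∧ ∀ i, j ≤ i → i ≤ m → w (j + n) ≤ w (i + n)} := by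
      ext j
      simp only [Set.mem_setOf_eq, pathShift, sub_le_sub_iff_right]
    rw [hcond]
    have himg : SB = (fun i => i + n) ''
        {j : ℕ | j < m ∧ ∀ i, j ≤ i → i ≤ m → w (j + n) ≤ w (i + n)} := by
      ext j
      simp only [Set.mem_setOf_eq, Set.mem_image, hSB]
      constructor
      · rintro ⟨hj1, hj2, hmin⟩
        refine ⟨j - n, ⟨by omega, fun i h1 h2 => ?_⟩, by omega⟩
        have : j - n + n = j := by omega
        rw [this]
        exact hmin (i + n) (by omega) (by omega)
      · rintro ⟨i, ⟨hi, hmin⟩, rfl⟩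
        refine ⟨by omega, by omega, fun i' h1 h2 => ?_⟩
        have : i' - n + n = i' := by omega
        rw [← this]
        exact hmin (i' - n) (by omega) (by omega)
    rw [himg, Set.ncard_image_of_injective _ (add_left_injective n)]
  rw [hsplit, hmin_eq, hshift]
  omega
end

section
/- Let w : {0,...,z} → ℤ be a finite integer path with H_n(w) = Card{ 0 ≤ j < n : w(j) = min_{j ≤ k ≤ n} w(k) }, L_n(w) = Card{ 0 < j ≤ n : w(j) = max_{0 ≤ k ≤ j} w(k) }, ŵ^n the reversal at time n, w^{(n)} the shift at n, and t(a,w) = inf{ k ∈ [0,z] : w(k) ≥ a } (with inf ∅ = +∞). Set β(n,m) = n ∧ ( t( -min_{0 ≤ k ≤ m} w^{(n)}(k), ŵ^n ) - 1 )_+. Then for all 0 ≤ m ≤ z - n: min_{n ≤ k ≤ n+m} H_k(w) = L_n(ŵ^n) - L_{β(n,m)}(ŵ^n). -/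
/-- `β(n,m) = n ∧ ( t( -min_{0 ≤ k ≤ m} w^{(n)}(k), ŵ^n ) - 1 )_+`. -/
noncomputable def pathBeta (w : ℕ → ℤ) (n m : ℕ) : ℕ :=
  (min (n : ℕ∞)
    (firstPassage n (-(sInf (pathShift w n '' Set.Icc 0 m))) (pathRev w n) - 1)).toNat

section Aux

lemma img_fin (w : ℕ → ℤ) (a b : ℕ) : (w '' Set.Icc a b).Finite :=
  (Set.finite_Icc a b).image w

lemma img_ne (w : ℕ → ℤ) (a b : ℕ) (h : a ≤ b) : (w '' Set.Icc a b).Nonempty :=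
  ⟨w a, a, ⟨le_refl a, h⟩, rfl⟩

lemma sInf_img_le (w : ℕ → ℤ) {a b i : ℕ} (h1 : a ≤ i) (h2 : i ≤ b) :
    sInf (w '' Set.Icc a b) ≤ w i :=
  csInf_le (img_fin w a b).bddBelow ⟨i, ⟨h1, h2⟩, rfl⟩

lemma le_sInf_img (w : ℕ → ℤ) {a b : ℕ} (h : a ≤ b) (x : ℤ) :
    x ≤ sInf (w '' Set.Icc a b) ↔ ∀ i, a ≤ i → i ≤ b → x ≤ w i := by
  rw [le_csInf_iff (img_fin w a b).bddBelow (img_ne w a b h)]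
  constructor
  · intro H i h1 h2; exact H (w i) ⟨i, ⟨h1, h2⟩, rfl⟩
  · rintro H y ⟨i, ⟨h1, h2⟩, rfl⟩; exact H i h1 h2

lemma eq_sInf_img_iff (w : ℕ → ℤ) {a b : ℕ} (h : a ≤ b) :
    w a = sInf (w '' Set.Icc a b) ↔ ∀ i, a ≤ i → i ≤ b → w a ≤ w i := by
  constructor
  · intro H i h1 h2; rw [H]; exact sInf_img_le w h1 h2
  · intro H
    exact le_antisymm ((le_sInf_img w h (w a)).2 H) (sInf_img_le w (le_refl a) h)

lemma le_sSup_img (w : ℕ → ℤ) {a b i : ℕ} (h1 : a ≤ i) (h2 : i ≤ b) :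
    w i ≤ sSup (w '' Set.Icc a b) :=
  le_csSup (img_fin w a b).bddAbove ⟨i, ⟨h1, h2⟩, rfl⟩

lemma eq_sSup_img_iff (v : ℕ → ℤ) (j : ℕ) :
    v j = sSup (v '' Set.Icc 0 j) ↔ ∀ i, i ≤ j → v i ≤ v j := by
  constructor
  · intro H i h2; rw [H]; exact le_sSup_img v (Nat.zero_le i) h2
  · intro H
    refine le_antisymm (le_sSup_img v (Nat.zero_le j) (le_refl j)) ?_
    refine csSup_le (img_ne v 0 j (Nat.zero_le j)) ?_
    rintro y ⟨i, ⟨_, h2⟩, rfl⟩; exact H i h2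

lemma sInf_sub_const (s : Set ℤ) (hf : s.Finite) (hne : s.Nonempty) (c : ℤ) :
    sInf ((fun x => x - c) '' s) = sInf s - c := by
  apply le_antisymm
  · exact csInf_le (hf.image _).bddBelow ⟨sInf s, hne.csInf_mem hf, rfl⟩
  · refine le_csInf (hne.image _) ?_
    rintro y ⟨x, hx, rfl⟩
    simpa using csInf_le hf.bddBelow hx

lemma shift_inf (w : ℕ → ℤ) (n m : ℕ) :
    sInf (pathShift w n '' Set.Icc 0 m) = sInf (w '' Set.Icc n (n + m)) - w n := by
  have himg : pathShift w n '' Set.Icc 0 m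
      = (fun x => x - w n) '' (w '' Set.Icc n (n + m)) := by
    rw [Set.image_image]
    ext x
    constructor
    · rintro ⟨k, ⟨-, hk⟩, rfl⟩
      exact ⟨k + n, ⟨Nat.le_add_left n k, by omega⟩, rfl⟩
    · rintro ⟨i, ⟨h1, h2⟩, rfl⟩
      have hin : i - n + n = i := by omega
      exact ⟨i - n, ⟨Nat.zero_le _, by omega⟩, by simp [pathShift, hin]⟩
  rw [himg, sInf_sub_const _ (img_fin w n (n + m)) (img_ne w n (n + m) (Nat.le_add_right n m))]

/-- The set whose infimum is the first passage time appearing in `pathBeta`. -/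
def Fset (w : ℕ → ℤ) (n m : ℕ) : Set ℕ :=
  {i : ℕ | i ≤ n ∧ w (n - i) ≤ sInf (w '' Set.Icc n (n + m))}

lemma Fset_eq (w : ℕ → ℤ) (n m : ℕ) :
    {j : ℕ | j ≤ n ∧ -(sInf (pathShift w n '' Set.Icc 0 m)) ≤ pathRev w n j}
      = Fset w n m := by
  ext i
  simp only [Set.mem_setOf_eq, Fset, shift_inf, pathRev]
  constructor
  · rintro ⟨h1, h2⟩; exact ⟨h1, by omega⟩
  · rintro ⟨h1, h2⟩; exact ⟨h1, by omega⟩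

lemma pathBeta_of_empty (w : ℕ → ℤ) (n m : ℕ) (he : Fset w n m = ∅) :
    pathBeta w n m = n := by
  unfold pathBeta firstPassage
  rw [Fset_eq, he]
  simp

lemma pathBeta_of_nonempty (w : ℕ → ℤ) (n m : ℕ) (hne : (Fset w n m).Nonempty) :
    pathBeta w n m = sInf (Fset w n m) - 1 := by
  unfold pathBeta firstPassage
  rw [Fset_eq]
  set t : ℕ := sInf (Fset w n m) with ht
  have htn : t ≤ n := (Nat.sInf_mem hne).1
  have hfp : sInf ((fun j : ℕ => (j : ℕ∞)) '' Fset w n m) = ((t : ℕ) : ℕ∞) := by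
    apply le_antisymm
    · exact sInf_le ⟨t, Nat.sInf_mem hne, rfl⟩
    · refine le_sInf ?_
      rintro y ⟨i, hi, rfl⟩
      exact Nat.cast_le.2 (by rw [ht]; exact Nat.sInf_le hi : t ≤ i)
  rw [hfp]
  have h1 : ((t : ℕ) : ℕ∞) - 1 = ((t - 1 : ℕ) : ℕ∞) := by
    rw [ENat.coe_sub]; rfl
  rw [h1, ← Nat.mono_cast.map_min (a := n) (b := t - 1)]
  rw [ENat.toNat_coe]
  omega

lemma pathBeta_le (w : ℕ → ℤ) (n m : ℕ) : pathBeta w n m ≤ n := by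
  by_cases he : Fset w n m = ∅
  · rw [pathBeta_of_empty w n m he]
  · have hne := Set.nonempty_iff_ne_empty.2 he
    rw [pathBeta_of_nonempty w n m hne]
    have := (Nat.sInf_mem hne).1
    omega

lemma beta_thresh (w : ℕ → ℤ) (n m : ℕ) {j : ℕ} (hj : j < n)
    (hrec : ∀ p, j ≤ p → p ≤ n → w j ≤ w p) :
    pathBeta w n m < n - j ↔ w j ≤ sInf (w '' Set.Icc n (n + m)) := by
  by_cases he : Fset w n m = ∅
  · rw [pathBeta_of_empty w n m he]
    constructor
    · intro hlt; omega
    · intro hle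
      exfalso
      have : n - j ∈ Fset w n m := ⟨by omega, by rw [Nat.sub_sub_self hj.le]; exact hle⟩
      rw [he] at this
      exact this
  · have hne := Set.nonempty_iff_ne_empty.2 he
    rw [pathBeta_of_nonempty w n m hne]
    have htmem := Nat.sInf_mem hne
    set t := sInf (Fset w n m) with ht
    have htn : t ≤ n := htmem.1
    constructor
    · intro hlt
      have hts : t ≤ n - j := by omega
      exact (hrec (n - t) (by omega) (by omega)).trans htmem.2
    · intro hle
      have hmem : n - j ∈ Fset w n m :=
        ⟨by omega, by rw [Nat.sub_sub_self hj.le]; exact hle⟩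
      have := Nat.sInf_le hmem
      omega

lemma rec_rev (w : ℕ → ℤ) (n : ℕ) {i : ℕ} (hin : i ≤ n) :
    (pathRev w n i = sSup (pathRev w n '' Set.Icc 0 i)) ↔
      (∀ p, n - i ≤ p → p ≤ n → w (n - i) ≤ w p) := by
  rw [eq_sSup_img_iff]
  constructor
  · intro H p h1 h2
    have := H (n - p) (by omega)
    simp only [pathRev, Nat.sub_sub_self h2] at this
    omega
  · intro H l hl
    have := H (n - l) (by omega) (by omega)
    simp only [pathRev]
    omega

lemma S_iff (w : ℕ → ℤ) (n m : ℕ) {j : ℕ} (hj : j < n) :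
    w j = sInf (w '' Set.Icc j (n + m)) ↔
      ((∀ p, j ≤ p → p ≤ n → w j ≤ w p) ∧ w j ≤ sInf (w '' Set.Icc n (n + m))) := by
  rw [eq_sInf_img_iff w (show j ≤ n + m by omega), le_sInf_img w (Nat.le_add_right n m)]
  constructor
  · intro H
    exact ⟨fun p h1 h2 => H p h1 (by omega), fun p h1 h2 => H p (by omega) h2⟩
  · rintro ⟨H1, H2⟩ i h1 h2
    rcases le_or_gt i n with hc | hc
    · exact H1 i h1 hc
    · exact H2 i hc.le h2

lemma count_core (w : ℕ → ℤ) (n m b : ℕ) (hbn : b ≤ n)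
    (hb : ∀ j, j < n → (∀ p, j ≤ p → p ≤ n → w j ≤ w p) →
      (b < n - j ↔ w j ≤ sInf (w '' Set.Icc n (n + m)))) :
    pathL (pathRev w n) n - pathL (pathRev w n) b
      = {j : ℕ | j < n ∧ w j = sInf (w '' Set.Icc j (n + m))}.ncard := by
  set v := pathRev w n with hv
  set S := {j : ℕ | j < n ∧ w j = sInf (w '' Set.Icc j (n + m))} with hS
  set Rn := {j : ℕ | 0 < j ∧ j ≤ n ∧ v j = sSup (v '' Set.Icc 0 j)} with hRn
  set Rb := {j : ℕ | 0 < j ∧ j ≤ b ∧ v j = sSup (v '' Set.Icc 0 j)} with hRb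
  have hsub : Rb ⊆ Rn := fun x hx => ⟨hx.1, hx.2.1.trans hbn, hx.2.2⟩
  have hfin : Rn.Finite := (Set.finite_Iic n).subset (fun x hx => hx.2.1)
  have hdiff : (Rn \ Rb).ncard = pathL v n - pathL v b := Set.ncard_diff hsub (hfin.subset hsub)
  have himg : Rn \ Rb = (fun j => n - j) '' S := by
    ext i
    constructor
    · rintro ⟨⟨hi0, hin, hrec⟩, hnb⟩
      have hbi : b < i := by
        by_contra hc
        exact hnb ⟨hi0, by omega, hrec⟩
      set j := n - i with hji
      have hjn : j < n := by omega
      have hrecj : ∀ p, j ≤ p → p ≤ n → w j ≤ w p := (rec_rev w n hin).1 hrec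
      have hms : w j ≤ sInf (w '' Set.Icc n (n + m)) :=
        (hb j hjn hrecj).1 (by omega)
      exact ⟨j, ⟨hjn, (S_iff w n m hjn).2 ⟨hrecj, hms⟩⟩, by show n - j = i; omega⟩
    · rintro ⟨j, hjS, hji⟩
      have hji' : n - j = i := hji
      subst hji'
      obtain ⟨hjn, hjrec⟩ := hjS
      obtain ⟨hrecj, hms⟩ := (S_iff w n m hjn).1 hjrec
      have hbj : b < n - j := (hb j hjn hrecj).2 hms
      have hrev : v (n - j) = sSup (v '' Set.Icc 0 (n - j)) := by
        rw [hv, rec_rev w n (by omega : n - j ≤ n)]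
        intro p h1 h2
        rw [Nat.sub_sub_self hjn.le] at h1 ⊢
        exact hrecj p h1 h2
      refine ⟨⟨by omega, by omega, hrev⟩, ?_⟩
      rintro ⟨-, hle, -⟩
      omega
  have hinj : Set.InjOn (fun j => n - j) S := by
    intro x hx y hy hxy
    simp only at hxy
    have hx' : x < n := hx.1
    have hy' : y < n := hy.1
    omega
  rw [← hdiff, himg, Set.ncard_image_of_injOn hinj]

lemma lhs_eq (w : ℕ → ℤ) (n m : ℕ) :
    sInf (pathHeight w '' Set.Icc n (n + m))
      = {j : ℕ | j < n ∧ w j = sInf (w '' Set.Icc j (n + m))}.ncard := by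
  set S := {j : ℕ | j < n ∧ w j = sInf (w '' Set.Icc j (n + m))} with hS
  set ms := sInf (w '' Set.Icc n (n + m)) with hms
  -- lower bound: S is contained in the height set of every k ∈ [n, n+m]
  have hlb : ∀ k, n ≤ k → k ≤ n + m → S.ncard ≤ pathHeight w k := by
    intro k hk1 hk2
    have hsub : S ⊆ {j : ℕ | j < k ∧ w j = sInf (w '' Set.Icc j k)} := by
      rintro j ⟨hjn, hjrec⟩
      refine ⟨by omega, ?_⟩
      rw [eq_sInf_img_iff w (show j ≤ k by omega)]
      rw [eq_sInf_img_iff w (show j ≤ n + m by omega)] at hjrec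
      intro i h1 h2
      exact hjrec i h1 (by omega)
    have hfin : {j : ℕ | j < k ∧ w j = sInf (w '' Set.Icc j k)}.Finite :=
      (Set.finite_Iio k).subset (fun x hx => hx.1)
    exact Set.ncard_le_ncard hsub hfin
  -- the first argmin
  obtain ⟨k0, ⟨hk01, hk02⟩, hk0v⟩ :=
    (img_ne w n (n + m) (Nat.le_add_right n m)).csInf_mem (img_fin w n (n + m))
  set U := {k : ℕ | n ≤ k ∧ k ≤ n + m ∧ w k = ms} with hU
  have hUne : U.Nonempty := ⟨k0, hk01, hk02, hk0v.symm ▸ rfl⟩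
  set ks := sInf U with hks
  have hksU : ks ∈ U := Nat.sInf_mem hUne
  obtain ⟨hks1, hks2, hks3⟩ := hksU
  have hkey : {j : ℕ | j < ks ∧ w j = sInf (w '' Set.Icc j ks)} = S := by
    ext j
    constructor
    · rintro ⟨hjk, hjrec⟩
      rw [eq_sInf_img_iff w hjk.le] at hjrec
      have hjn : j < n := by
        by_contra hc
        push_neg at hc
        have h1 : w j ≤ w ks := hjrec ks hjk.le (le_refl ks)
        have h2 : ms ≤ w j := sInf_img_le w hc (by omega)
        have : j ∈ U := ⟨hc, by omega, by omega⟩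
        have := Nat.sInf_le this
        omega
      refine ⟨hjn, ?_⟩
      rw [eq_sInf_img_iff w (show j ≤ n + m by omega)]
      intro i h1 h2
      rcases le_or_gt i ks with hc | hc
      · exact hjrec i h1 hc
      · have hw1 : w j ≤ w ks := hjrec ks hjk.le (le_refl ks)
        have hw2 : ms ≤ w i := sInf_img_le w (by omega) h2
        omega
    · rintro ⟨hjn, hjrec⟩
      rw [eq_sInf_img_iff w (show j ≤ n + m by omega)] at hjrec
      refine ⟨by omega, ?_⟩
      rw [eq_sInf_img_iff w (show j ≤ ks by omega)]
      intro i h1 h2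
      exact hjrec i h1 (by omega)
  apply le_antisymm
  · have hpk : pathHeight w ks = S.ncard := by
      unfold pathHeight
      rw [hkey]
    have hmem : S.ncard ∈ pathHeight w '' Set.Icc n (n + m) :=
      ⟨ks, ⟨hks1, hks2⟩, hpk⟩
    exact Nat.sInf_le hmem
  · refine le_csInf ⟨pathHeight w n, ⟨n, ⟨le_refl n, Nat.le_add_right n m⟩, rfl⟩⟩ ?_
    rintro y ⟨k, ⟨h1, h2⟩, rfl⟩
    exact hlb k h1 h2

end Aux

/-- for a finite integer path `w` of lifetime `z` and `n + m ≤ z`,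
`min_{n ≤ k ≤ n+m} H_k(w) = L_n(ŵ^n) - L_{β(n,m)}(ŵ^n)`. -/
theorem min_height_eq_record_difference (z : ℕ) (w : ℕ → ℤ) (n m : ℕ)
    (h : n + m ≤ z) :
    sInf (pathHeight w '' Set.Icc n (n + m))
      = pathL (pathRev w n) n - pathL (pathRev w n) (pathBeta w n m) := by
  rw [lhs_eq w n m]
  exact (count_core w n m (pathBeta w n m) (pathBeta_le w n m)
    (fun j hj hrec => beta_thresh w n m hj hrec)).symm
end
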